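/- The RBF (squared exponential) kernel k(s,t) = exp(−(s−t)²/(2l²)) with l > 0 is a positive semidefinite kernel on ℝ: every Gram matrix formed from finitely many points is positive semidefinite. -/

import Mathlib

/-!
Expanding the square, `exp (-a (s - t)²) = exp (-a s²) · exp (2a s t) · exp (-a t²)`. The outer
factors are a diagonal rescaling, which preserves positive semidefiniteness, and for `c ≥ 0` the
power series `exp (c s t) = ∑ₘ cᵐ/m! · sᵐ tᵐ` is a convergent sum of nonnegative multiples of
rank-one kernels `sᵐ tᵐ`.
-/

open Finset Real

def IsPosSemidefKernel {α : Type*} (k : α → α → ℝ) : Prop :=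
  ∀ (n : ℕ) (t : Fin n → α) (x : Fin n → ℝ), 0 ≤ ∑ i, ∑ j, x i * k (t i) (t j) * x j

namespace IsPosSemidefKernel

variable {α : Type*}

theorem mul_self_apply (g : α → ℝ) : IsPosSemidefKernel fun s t => g s * g t := by
  intro n t x
  have hsq : ∑ i, ∑ j, x i * (g (t i) * g (t j)) * x j = (∑ i, x i * g (t i)) ^ 2 := by
    rw [sq, sum_mul_sum]
    exact sum_congr rfl fun i _ => sum_congr rfl fun j _ => by ring
  exact hsq ▸ sq_nonneg _

theorem const_mul {k : α → α → ℝ} (hk : IsPosSemidefKernel k) {c : ℝ} (hc : 0 ≤ c) :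
    IsPosSemidefKernel fun s t => c * k s t := by
  intro n t x
  have hform : ∑ i, ∑ j, x i * (c * k (t i) (t j)) * x j
      = c * ∑ i, ∑ j, x i * k (t i) (t j) * x j := by
    simp only [mul_sum]
    exact sum_congr rfl fun i _ => sum_congr rfl fun j _ => by ring
  exact hform ▸ mul_nonneg hc (hk n t x)

theorem conj {k : α → α → ℝ} (hk : IsPosSemidefKernel k) (f : α → ℝ) :
    IsPosSemidefKernel fun s t => f s * k s t * f t := by
  intro n t x
  have hform : ∑ i, ∑ j, x i * (f (t i) * k (t i) (t j) * f (t j)) * x j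
      = ∑ i, ∑ j, (x i * f (t i)) * k (t i) (t j) * (x j * f (t j)) :=
    sum_congr rfl fun i _ => sum_congr rfl fun j _ => by ring
  exact hform ▸ hk n t fun i => x i * f (t i)

theorem of_hasSum {ι : Type*} {k : ι → α → α → ℝ} {K : α → α → ℝ}
    (hk : ∀ m, IsPosSemidefKernel (k m)) (hK : ∀ s t, HasSum (fun m => k m s t) (K s t)) :
    IsPosSemidefKernel K := by
  intro n t x
  have hform : HasSum (fun m => ∑ i, ∑ j, x i * k m (t i) (t j) * x j)
      (∑ i, ∑ j, x i * K (t i) (t j) * x j) :=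
    hasSum_sum fun i _ => hasSum_sum fun j _ => ((hK (t i) (t j)).mul_left (x i)).mul_right (x j)
  exact hform.nonneg fun m => hk m n t x

end IsPosSemidefKernel

open IsPosSemidefKernel

theorem isPosSemidefKernel_exp_mul {c : ℝ} (hc : 0 ≤ c) :
    IsPosSemidefKernel fun s t : ℝ => exp (c * s * t) := by
  refine of_hasSum (k := fun (m : ℕ) (s t : ℝ) => c ^ m / m.factorial * (s ^ m * t ^ m))
    (fun m => (mul_self_apply (· ^ m)).const_mul (by positivity)) fun s t => ?_
  have hterm : ∀ m : ℕ, c ^ m / m.factorial * (s ^ m * t ^ m) = (c * s * t) ^ m / m.factorial :=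
    fun m => by ring
  simpa only [hterm, Real.exp_eq_exp_ℝ] using NormedSpace.expSeries_div_hasSum_exp (c * s * t)

theorem isPosSemidefKernel_exp_neg_mul_sub_sq {a : ℝ} (ha : 0 ≤ a) :
    IsPosSemidefKernel fun s t : ℝ => exp (-a * (s - t) ^ 2) := by
  have hsplit : ∀ s t : ℝ,
      exp (-a * (s - t) ^ 2) = exp (-a * s ^ 2) * exp (2 * a * s * t) * exp (-a * t ^ 2) := by
    intro s t
    rw [← exp_add, ← exp_add]
    congr 1
    ring
  simpa only [hsplit] using (isPosSemidefKernel_exp_mul (by positivity)).conj _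

theorem rbf_kernel_posSemidef_general (l : ℝ)
    (n : ℕ) (t : Fin n → ℝ) (x : Fin n → ℝ) :
    0 ≤ ∑ i, ∑ j, x i * Real.exp (-(t i - t j) ^ 2 / (2 * l ^ 2)) * x j := by
  have hrbf := isPosSemidefKernel_exp_neg_mul_sub_sq (a := (2 * l ^ 2)⁻¹) (by positivity) n t x
  convert hrbf using 6
  ring

theorem rbf_kernel_posSemidef (l : ℝ) (hl : 0 < l)
    (n : ℕ) (t : Fin n → ℝ) (x : Fin n → ℝ) :
    0 ≤ ∑ i, ∑ j, x i * Real.exp (-(t i - t j) ^ 2 / (2 * l ^ 2)) * x j :=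
  rbf_kernel_posSemidef_general l n t x
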